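/- arXiv:2310.01737 — 3 statements merged into one kernel-verified Lean document; each statement's English description precedes it below -/
import Mathlib

section
/- Generalized performance difference lemma (trajectory form): for every (possibly nonstationary) stochastic policy π and every time-indexed baseline f = (f_t : S → ℝ)_{0 ≤ t ≤ H} with f_H ≡ 0, and every initial state s₀ ∈ S, the value satisfies V^π_0(s₀) − f_0(s₀) = Σ_{t=0}^{H−1} E_{s ∼ d^{π,s₀}_t}[ A^f_t(s, π) ], where d^{π,s₀}_t is the state distribution at time t under π started from s₀. -/
/-!
Write `T_t g (s) = E_{a ∼ π_t(s)}[r(s,a) + E_{s' ∼ P(s,a)} g(s')]` for the Bellman evaluation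
operator, so that `V_t = T_t V_{t+1}` and the summand is `E_{d_t}[T_t f_{t+1} − f_t]`.
The reward cancels in `T_t g − T_t g'`, and averaging one transition of the chain against
`d_t` gives `E_{d_t}[T_t g − T_t g'] = E_{d_{t+1}}[g − g']`. Hence the summand equals
`E_{d_t}[V_t − f_t] − E_{d_{t+1}}[V_{t+1} − f_{t+1}]`, and the sum telescopes to
`E_{d_0}[V_0 − f_0] − E_{d_H}[V_H − f_H] = V_0(s₀) − f_0(s₀)`.
-/

open scoped BigOperators

/-- Expectation of a real-valued function under a probability mass function on a finite type. -/
noncomputable def pexp {α : Type*} [Fintype α] (p : PMF α) (f : α → ℝ) : ℝ :=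
  ∑ a, (p a).toReal * f a

section pexp

variable {α β : Type*} [Fintype α] [Fintype β]

lemma PMF.sum_toReal_eq_one (p : PMF α) : ∑ a, (p a).toReal = 1 := by
  have total := p.tsum_coe
  rw [tsum_fintype] at total
  rw [← ENNReal.toReal_sum fun a _ => p.apply_ne_top a, total, ENNReal.toReal_one]

lemma pexp_const (p : PMF α) (c : ℝ) : pexp p (fun _ => c) = c := by
  rw [pexp, ← Finset.sum_mul, PMF.sum_toReal_eq_one, one_mul]

lemma pexp_sub (p : PMF α) (g h : α → ℝ) : pexp p (g - h) = pexp p g - pexp p h := by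
  simp only [pexp, Pi.sub_apply, mul_sub, Finset.sum_sub_distrib]

lemma pexp_sub_const (p : PMF α) (g : α → ℝ) (c : ℝ) :
    pexp p (fun a => g a - c) = pexp p g - c := by
  rw [← pexp_const p c, ← pexp_sub, pexp_const]
  rfl

lemma pexp_pure (x : α) (g : α → ℝ) : pexp (PMF.pure x) g = g x := by
  rw [pexp, Finset.sum_eq_single x (fun b _ hb => by simp [PMF.pure_apply, hb]) (by simp)]
  simp [PMF.pure_apply]

lemma pexp_bind (p : PMF α) (q : α → PMF β) (g : β → ℝ) :
    pexp (p.bind q) g = pexp p (fun a => pexp (q a) g) := by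
  have bind_toReal (b : β) : ((p.bind q) b).toReal = ∑ a, (p a).toReal * (q a b).toReal := by
    rw [PMF.bind_apply, tsum_fintype,
      ENNReal.toReal_sum fun a _ => ENNReal.mul_ne_top (p.apply_ne_top a) ((q a).apply_ne_top b)]
    simp only [ENNReal.toReal_mul]
  simp only [pexp, bind_toReal, Finset.sum_mul, Finset.mul_sum, mul_assoc]
  exact Finset.sum_comm

end pexp

section Bellman

variable {S A : Type*} [Fintype S] [Fintype A]

noncomputable def bellmanEval (P : S → A → PMF S) (r : S → A → ℝ) (μ : S → PMF A)
    (g : S → ℝ) (s : S) : ℝ :=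
  pexp (μ s) (fun a => r s a + pexp (P s a) g)

lemma bellmanEval_sub_bellmanEval (P : S → A → PMF S) (r : S → A → ℝ) (μ : S → PMF A)
    (g g' : S → ℝ) (s : S) :
    bellmanEval P r μ g s - bellmanEval P r μ g' s =
      pexp (μ s) (fun a => pexp (P s a) (g - g')) := by
  rw [bellmanEval, bellmanEval, ← pexp_sub]
  congr 1
  funext a
  simp only [Pi.sub_apply, pexp_sub]
  ring

lemma pexp_bellmanEval_sub_bellmanEval (P : S → A → PMF S) (r : S → A → ℝ) (μ : S → PMF A)
    (ν : PMF S) (g g' : S → ℝ) :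
    pexp ν (bellmanEval P r μ g - bellmanEval P r μ g') =
      pexp (ν.bind fun s => (μ s).bind fun a => P s a) (g - g') := by
  simp only [pexp_bind]
  congr 1
  funext s
  exact bellmanEval_sub_bellmanEval P r μ g g' s

end Bellman

theorem generalized_performance_difference_trajectory_general
    {S A : Type*} [Fintype S] [Fintype A]
    (P : S → A → PMF S) (r : S → A → ℝ)
    (H : ℕ)
    (π : ℕ → S → PMF A)
    (V : ℕ → S → ℝ)
    (hVH : ∀ s, V H s = 0)
    (hV : ∀ t, t < H → ∀ s,
      V t s = pexp (π t s) (fun a => r s a + pexp (P s a) (V (t + 1))))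
    (f : ℕ → S → ℝ)
    (hfH : ∀ s, f H s = 0)
    (s₀ : S)
    (d : ℕ → PMF S)
    (hd0 : d 0 = PMF.pure s₀)
    (hd : ∀ t, d (t + 1) = (d t).bind fun s => (π t s).bind fun a => P s a) :
    V 0 s₀ - f 0 s₀ =
      ∑ t ∈ Finset.range H,
        pexp (d t) (fun s =>
          pexp (π t s) (fun a => r s a + pexp (P s a) (f (t + 1)) - f t s)) := by
  set gap : ℕ → ℝ := fun t => pexp (d t) (V t - f t)
  have summand_eq (t : ℕ) (ht : t < H) :
      pexp (d t) (fun s => pexp (π t s) (fun a => r s a + pexp (P s a) (f (t + 1)) - f t s)) =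
        gap t - gap (t + 1) := by
    have hVt : V t = bellmanEval P r (π t) (V (t + 1)) := funext (hV t ht)
    calc _ = pexp (d t) ((V t - f t) - (bellmanEval P r (π t) (V (t + 1)) -
              bellmanEval P r (π t) (f (t + 1)))) := by
          congr 1
          funext s
          rw [pexp_sub_const, Pi.sub_apply, Pi.sub_apply, Pi.sub_apply, hVt]
          simp only [bellmanEval]
          ring
      _ = gap t - gap (t + 1) := by
          rw [pexp_sub, pexp_bellmanEval_sub_bellmanEval, ← hd]
  have gap_zero : gap 0 = V 0 s₀ - f 0 s₀ := by
    simp only [gap, hd0, pexp_pure, Pi.sub_apply]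
  have gap_horizon : gap H = 0 := by
    simp only [gap, show V H - f H = fun _ => 0 from funext fun s => by simp [hVH, hfH],
      pexp_const]
  rw [Finset.sum_congr rfl fun t ht => summand_eq t (Finset.mem_range.mp ht),
    Finset.sum_range_sub', gap_zero, gap_horizon, sub_zero]

/-- Generalized performance difference lemma (trajectory form):
for every (possibly nonstationary) stochastic policy `π` and every time-indexed baseline
`f` with `f H ≡ 0`, and every initial state `s₀`,
`V^π_0(s₀) − f_0(s₀) = Σ_{t=0}^{H−1} E_{s ∼ d^{π,s₀}_t}[ A^f_t(s, π) ]`. -/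
theorem generalized_performance_difference_trajectory
    {S A : Type*} [Fintype S] [Nonempty S] [Fintype A] [Nonempty A]
    (P : S → A → PMF S) (r : S → A → ℝ)
    (hr : ∀ s a, 0 ≤ r s a ∧ r s a ≤ 1)
    (H : ℕ)
    (π : ℕ → S → PMF A)
    (V : ℕ → S → ℝ)
    (hVH : ∀ s, V H s = 0)
    (hV : ∀ t, t < H → ∀ s,
      V t s = pexp (π t s) (fun a => r s a + pexp (P s a) (V (t + 1))))
    (f : ℕ → S → ℝ)
    (hfH : ∀ s, f H s = 0)
    (s₀ : S)
    (d : ℕ → PMF S)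
    (hd0 : d 0 = PMF.pure s₀)
    (hd : ∀ t, d (t + 1) = (d t).bind fun s => (π t s).bind fun a => P s a) :
    V 0 s₀ - f 0 s₀ =
      ∑ t ∈ Finset.range H,
        pexp (d t) (fun s =>
          pexp (π t s) (fun a => r s a + pexp (P s a) (f (t + 1)) - f t s)) :=
  generalized_performance_difference_trajectory_general P r H π V hVH hV f hfH s₀ d hd0 hd
end

section
/- Proposition 1 (pointwise form): the max⁺-following policy π° satisfies V^{π°}_t(s) ≥ f⁺_t(s) = max_{k∈[K]} V^{π^k}_t(s) for every 0 ≤ t ≤ H and every s ∈ S; in particular, following π° is at least as good as following any single policy in the extended oracle set. -/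
open scoped BigOperators

lemma pexp_mono {α : Type*} [Fintype α] (p : PMF α) {f g : α → ℝ} (h : ∀ a, f a ≤ g a) :
    pexp p f ≤ pexp p g :=
  Finset.sum_le_sum fun a _ => mul_le_mul_of_nonneg_left (h a) ENNReal.toReal_nonneg

section Backup

variable {S A : Type*} [Fintype S] [Fintype A] (P : S → A → PMF S) (r : S → A → ℝ)

lemma pexp_backup_mono (p : PMF A) (s : S) {V W : S → ℝ} (h : ∀ s', V s' ≤ W s') :
    pexp p (fun a => r s a + pexp (P s a) V) ≤ pexp p (fun a => r s a + pexp (P s a) W) :=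
  pexp_mono p fun a => add_le_add_right (pexp_mono (P s a) h) (r s a)

lemma value_le_argmaxFollowing_value {ι : Type*} {H : ℕ}
    (πs : ι → ℕ → S → PMF A) (Vs : ι → ℕ → S → ℝ)
    (hVsH : ∀ k s, Vs k H s = 0)
    (hVs : ∀ k t, t < H → ∀ s,
      Vs k t s = pexp (πs k t s) (fun a => r s a + pexp (P s a) (Vs k (t + 1))))
    (kstar : ℕ → S → ι) (hbest : ∀ t s k, Vs k t s ≤ Vs (kstar t s) t s)
    (Vo : ℕ → S → ℝ) (hVoH : ∀ s, Vo H s = 0)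
    (hVo : ∀ t, t < H → ∀ s,
      Vo t s = pexp (πs (kstar t s) t s) (fun a => r s a + pexp (P s a) (Vo (t + 1))))
    {t : ℕ} (ht : t ≤ H) (s : S) (k : ι) : Vs k t s ≤ Vo t s := by
  induction ht using Nat.decreasingInduction generalizing s k with
  | self => rw [hVsH, hVoH]
  | of_succ t ht ih =>
    calc Vs k t s ≤ Vs (kstar t s) t s := hbest t s k
      _ = pexp (πs (kstar t s) t s)
            (fun a => r s a + pexp (P s a) (Vs (kstar t s) (t + 1))) := hVs _ t ht s
      _ ≤ pexp (πs (kstar t s) t s) (fun a => r s a + pexp (P s a) (Vo (t + 1))) :=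
            pexp_backup_mono P r _ s fun s' => ih s' (kstar t s)
      _ = Vo t s := (hVo t ht s).symm

end Backup

theorem maxplus_following_value_dominance_general
    {S A : Type*} [Fintype S] [Fintype A]
    (P : S → A → PMF S) (r : S → A → ℝ)
    (H : ℕ)
    (K : ℕ)
    (πs : Fin K → ℕ → S → PMF A)
    (Vs : Fin K → ℕ → S → ℝ)
    (hVsH : ∀ k s, Vs k H s = 0)
    (hVs : ∀ k t, t < H → ∀ s,
      Vs k t s = pexp (πs k t s) (fun a => r s a + pexp (P s a) (Vs k (t + 1))))
    (fplus : ℕ → S → ℝ)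
    (hfplus : ∀ t s, fplus t s = ⨆ k : Fin K, Vs k t s)
    (kstar : ℕ → S → Fin K)
    (hkstar : ∀ t s, Vs (kstar t s) t s = fplus t s)
    (Vo : ℕ → S → ℝ)
    (hVoH : ∀ s, Vo H s = 0)
    (hVo : ∀ t, t < H → ∀ s,
      Vo t s = pexp (πs (kstar t s) t s) (fun a => r s a + pexp (P s a) (Vo (t + 1)))) :
    ∀ t, t ≤ H → ∀ s, fplus t s ≤ Vo t s ∧ ∀ k : Fin K, Vs k t s ≤ Vo t s := by
  have hbest : ∀ t s k, Vs k t s ≤ Vs (kstar t s) t s := fun t s k => by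
    rw [hkstar, hfplus]
    exact le_ciSup (f := fun k => Vs k t s) (Set.finite_range _).bddAbove k
  intro t ht s
  have hdom := value_le_argmaxFollowing_value P r πs Vs hVsH hVs kstar hbest Vo hVoH hVo ht s
  exact ⟨hkstar t s ▸ hdom (kstar t s), hdom⟩

/-- Proposition 1 (pointwise form): the max⁺-following policy `π°` satisfies
`V^{π°}_t(s) ≥ f⁺_t(s) = max_{k∈[K]} V^{π^k}_t(s)` for every `0 ≤ t ≤ H` and every state `s`;
in particular, following `π°` is at least as good as following any single policy in the
extended oracle set. -/
theorem maxplus_following_value_dominance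
    {S A : Type*} [Fintype S] [Nonempty S] [Fintype A] [Nonempty A]
    (P : S → A → PMF S) (r : S → A → ℝ)
    (hr : ∀ s a, 0 ≤ r s a ∧ r s a ≤ 1)
    (H : ℕ)
    (K : ℕ) (hK : 1 ≤ K)
    (πs : Fin K → ℕ → S → PMF A)
    (Vs : Fin K → ℕ → S → ℝ)
    (hVsH : ∀ k s, Vs k H s = 0)
    (hVs : ∀ k t, t < H → ∀ s,
      Vs k t s = pexp (πs k t s) (fun a => r s a + pexp (P s a) (Vs k (t + 1))))
    (fplus : ℕ → S → ℝ)
    (hfplus : ∀ t s, fplus t s = ⨆ k : Fin K, Vs k t s)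
    (kstar : ℕ → S → Fin K)
    (hkstar : ∀ t s, Vs (kstar t s) t s = fplus t s)
    (Vo : ℕ → S → ℝ)
    (hVoH : ∀ s, Vo H s = 0)
    (hVo : ∀ t, t < H → ∀ s,
      Vo t s = pexp (πs (kstar t s) t s) (fun a => r s a + pexp (P s a) (Vo (t + 1)))) :
    ∀ t, t ≤ H → ∀ s, fplus t s ≤ Vo t s ∧ ∀ k : Fin K, Vs k t s ≤ Vo t s :=
  maxplus_following_value_dominance_general P r H K πs Vs hVsH hVs fplus hfplus kstar hkstar Vo hVoH
    hVo
end

section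
/- Generalized advantage estimation as an exponentially-weighted average of k-step advantage estimators: let γ ∈ [0,1], λ ∈ [0,1), and let (r_t)_{t∈ℕ} and (f_t)_{t∈ℕ} be bounded real sequences. Define the TD residuals δ_t := r_t + γ f_{t+1} − f_t and the k-step advantage estimators A^{(k)}_t := (Σ_{l=0}^{k−1} γ^l r_{t+l}) + γ^k f_{t+k} − f_t for k ≥ 1. Then for every t ∈ ℕ, the series Σ_{k=1}^{∞} λ^{k−1} A^{(k)}_t and Σ_{l=0}^{∞} (γλ)^l δ_{t+l} both converge absolutely, and (1 − λ) Σ_{k=1}^{∞} λ^{k−1} A^{(k)}_t = Σ_{l=0}^{∞} (γλ)^l δ_{t+l}. -/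
/-!
The TD residuals telescope: `A^{(k+1)}_t = ∑_{l ≤ k} γ^l δ_{t+l}`. Hence
`∑_k λ^k A^{(k+1)}_t` is the Cauchy product of the geometric series `∑ λ^k = (1 - λ)⁻¹` with
`∑_l λ^l γ^l δ_{t+l}`, and both converge absolutely because `γ^l δ_{t+l}` is bounded.
-/

open Finset

section ExponentialAverage

variable {𝕜 : Type*} [NormedField 𝕜] {lam : 𝕜} {a : ℕ → 𝕜}

lemma summable_norm_pow_mul_of_norm_le (hlam : ‖lam‖ < 1) {C : ℝ} (ha : ∀ l, ‖a l‖ ≤ C) :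
    Summable fun l => ‖lam ^ l * a l‖ :=
  ((summable_geometric_of_lt_one (norm_nonneg lam) hlam).mul_right C).of_nonneg_of_le
    (fun _ => norm_nonneg _) fun l => by
      rw [norm_mul, norm_pow]
      exact mul_le_mul_of_nonneg_left (ha l) (pow_nonneg (norm_nonneg lam) l)

lemma sum_range_pow_mul_mul_pow_sub (lam : 𝕜) (a : ℕ → 𝕜) (n : ℕ) :
    ∑ l ∈ range (n + 1), lam ^ l * a l * lam ^ (n - l) = lam ^ n * ∑ l ∈ range (n + 1), a l := by
  rw [mul_sum]
  refine sum_congr rfl fun l hl => ?_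
  rw [mul_right_comm, pow_mul_pow_sub lam (Nat.le_of_lt_succ (mem_range.mp hl))]

lemma summable_norm_pow_mul_sum_range (hlam : ‖lam‖ < 1)
    (ha : Summable fun l => ‖lam ^ l * a l‖) :
    Summable fun n => ‖lam ^ n * ∑ l ∈ range (n + 1), a l‖ := by
  simpa only [sum_range_pow_mul_mul_pow_sub] using
    summable_norm_sum_mul_range_of_summable_norm ha (summable_norm_geometric_of_norm_lt_one hlam)

variable [CompleteSpace 𝕜]

lemma one_sub_mul_tsum_pow_mul_sum_range (hlam : ‖lam‖ < 1)
    (ha : Summable fun l => ‖lam ^ l * a l‖) :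
    (1 - lam) * ∑' n, lam ^ n * ∑ l ∈ range (n + 1), a l = ∑' l, lam ^ l * a l := by
  have hlam1 : 1 - lam ≠ 0 := sub_ne_zero.mpr fun h => by simp [← h] at hlam
  rw [← eq_inv_mul_iff_mul_eq₀ hlam1, ← tsum_geometric_of_norm_lt_one hlam, mul_comm,
    tsum_mul_tsum_eq_tsum_sum_range_of_summable_norm ha
      (summable_norm_geometric_of_norm_lt_one hlam)]
  simp only [sum_range_pow_mul_mul_pow_sub]

end ExponentialAverage

lemma sum_range_pow_mul_tdResidual {R : Type*} [CommRing R] (γ : R) (r f : ℕ → R) (t n : ℕ) :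
    ∑ l ∈ range n, γ ^ l * (r (t + l) + γ * f (t + (l + 1)) - f (t + l)) =
      (∑ l ∈ range n, γ ^ l * r (t + l)) + γ ^ n * f (t + n) - f t := by
  induction n with
  | zero => simp
  | succ n ih =>
    rw [sum_range_succ, ih, sum_range_succ]
    ring

/-- Generalized advantage estimation as an exponentially-weighted average of k-step
advantage estimators: with TD residuals `δ_t = r_t + γ f_{t+1} − f_t` and k-step advantage
estimators `A^{(k)}_t = (Σ_{l<k} γ^l r_{t+l}) + γ^k f_{t+k} − f_t` (`k ≥ 1`), for bounded
sequences `r`, `f` and `γ ∈ [0,1]`, `λ ∈ [0,1)`, both series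
`Σ_{k=1}^∞ λ^{k−1} A^{(k)}_t` and `Σ_{l=0}^∞ (γλ)^l δ_{t+l}` converge absolutely and
`(1 − λ) Σ_{k=1}^∞ λ^{k−1} A^{(k)}_t = Σ_{l=0}^∞ (γλ)^l δ_{t+l}`. -/
theorem gae_exponentially_weighted_average
    (γ lam : ℝ) (hγ : 0 ≤ γ ∧ γ ≤ 1) (hlam : 0 ≤ lam ∧ lam < 1)
    (r f : ℕ → ℝ)
    (hr : ∃ M : ℝ, ∀ t, |r t| ≤ M)
    (hf : ∃ M : ℝ, ∀ t, |f t| ≤ M)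
    (δ : ℕ → ℝ)
    (hδ : ∀ t, δ t = r t + γ * f (t + 1) - f t)
    (Ak : ℕ → ℕ → ℝ)
    (hAk : ∀ k t, Ak (k + 1) t =
      (∑ l ∈ Finset.range (k + 1), γ ^ l * r (t + l)) + γ ^ (k + 1) * f (t + (k + 1)) - f t)
    (t : ℕ) :
    Summable (fun k : ℕ => |lam ^ k * Ak (k + 1) t|) ∧
    Summable (fun l : ℕ => |(γ * lam) ^ l * δ (t + l)|) ∧
    (1 - lam) * (∑' k : ℕ, lam ^ k * Ak (k + 1) t) = ∑' l : ℕ, (γ * lam) ^ l * δ (t + l) := by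
  obtain ⟨Mr, hMr⟩ := hr
  obtain ⟨Mf, hMf⟩ := hf
  have hγ_abs : |γ| ≤ 1 := abs_le.mpr ⟨by linarith [hγ.1], hγ.2⟩
  have hlam_norm : ‖lam‖ < 1 := by rw [Real.norm_of_nonneg hlam.1]; exact hlam.2
  have hδ_bound : ∀ s, |δ s| ≤ Mr + Mf + Mf := fun s =>
    calc |δ s| ≤ |r s| + |γ| * |f (s + 1)| + |f s| := by
          rw [hδ, ← abs_mul]
          exact (abs_sub _ _).trans (add_le_add_left (abs_add_le _ _) _)
      _ ≤ Mr + Mf + Mf := by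
          gcongr
          · exact hMr s
          · exact (mul_le_of_le_one_left (abs_nonneg _) hγ_abs).trans (hMf _)
          · exact hMf s
  set a : ℕ → ℝ := fun l => γ ^ l * δ (t + l)
  have ha_bound : ∀ l, ‖a l‖ ≤ Mr + Mf + Mf := fun l => by
    rw [Real.norm_eq_abs, abs_mul, abs_pow]
    exact (mul_le_of_le_one_left (abs_nonneg _) (pow_le_one₀ (abs_nonneg γ) hγ_abs)).trans
      (hδ_bound _)
  have hAk_eq : ∀ k, Ak (k + 1) t = ∑ l ∈ range (k + 1), a l := fun k => by
    rw [hAk, ← sum_range_pow_mul_tdResidual]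
    simp only [a, hδ, add_assoc]
  have hweight : ∀ l, (γ * lam) ^ l * δ (t + l) = lam ^ l * a l := fun l => by
    rw [mul_pow]; ring
  have ha := summable_norm_pow_mul_of_norm_le hlam_norm ha_bound
  simp only [hAk_eq, hweight, ← Real.norm_eq_abs]
  exact ⟨summable_norm_pow_mul_sum_range hlam_norm ha, ha,
    one_sub_mul_tsum_pow_mul_sum_range hlam_norm ha⟩
end
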